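/- arXiv:2106.03224 — 6 statements merged into one kernel-verified Lean document; each statement's English description precedes it below -/
import Mathlib

section
/- Let p, r be primes and a, b positive integers with p^a = r^b + 1. Then either (i) p = 2, b = 1, and r is a Mersenne prime; or (ii) r = 2, a = 1, and p is a Fermat prime; or (iii) p^a = 9. -/
open Finset

/-- A geometric sum of an odd base with an odd number of terms is odd. -/
lemma odd_geom_sum_aux (y : ℤ) (n : ℕ) (hy : Odd y) (hn : Odd n) :
    Odd (∑ i ∈ range n, y ^ i) := by
  have hcast : ((∑ i ∈ range n, y ^ i : ℤ) : ZMod 2) = 1 := by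
    push_cast
    have hy1 : (y : ZMod 2) = 1 := by
      obtain ⟨k, hk⟩ := hy
      subst hk
      push_cast
      have h2 : (2 : ZMod 2) = 0 := rfl
      rw [h2]; ring
    rw [Finset.sum_congr rfl (fun i _ => by rw [hy1, one_pow])]
    simp only [Finset.sum_const, Finset.card_range, nsmul_eq_mul, mul_one]
    obtain ⟨k, hk⟩ := hn
    subst hk
    push_cast
    have h2 : (2 : ZMod 2) = 0 := rfl
    rw [h2]; ring
  rcases Int.even_or_odd (∑ i ∈ range n, y ^ i) with he | ho
  · exfalso
    have : ((∑ i ∈ range n, y ^ i : ℤ) : ZMod 2) = 0 := by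
      rw [ZMod.intCast_zmod_eq_zero_iff_dvd]
      exact he.two_dvd
    rw [this] at hcast
    exact zero_ne_one hcast
  · exact ho

/-- If an odd-length geometric sum of an odd base divides a power of two
and is positive, then the base satisfies `y ^ n = y`. -/
lemma geom_sum_dvd_two_pow (y : ℤ) (n m : ℕ) (hy : Odd y) (hn : Odd n)
    (hd : (∑ i ∈ range n, y ^ i) ∣ 2 ^ m)
    (hpos : 0 < ∑ i ∈ range n, y ^ i) : y ^ n = y := by
  set t := ∑ i ∈ range n, y ^ i with ht
  have htodd : Odd t := odd_geom_sum_aux y n hy hn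
  have h1 : t.natAbs = 1 := by
    have h2 : t.natAbs ∣ 2 ^ m := by
      have h3 := Int.natAbs_dvd_natAbs.mpr hd
      rwa [Int.natAbs_pow, show ((2 : ℤ)).natAbs = 2 from rfl] at h3
    have hcop : Nat.Coprime t.natAbs 2 :=
      Nat.coprime_two_right.mpr (Int.natAbs_odd.mpr htodd)
    exact Nat.Coprime.eq_one_of_dvd (hcop.pow_right m) h2
  have ht1 : t = 1 := by omega
  have hg := geom_sum_mul y n
  rw [← ht, ht1, one_mul] at hg
  linarith

/-- If `p, r` are primes and `a, b` positive integers with `p^a = r^b + 1`,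
then either `p = 2`, `b = 1` and `r` is a Mersenne prime, or `r = 2`, `a = 1`
and `p` is a Fermat prime, or `p^a = 9`. -/
theorem prime_power_eq_prime_power_add_one
    (p r a b : ℕ) (hp : p.Prime) (hr : r.Prime) (ha : 0 < a) (hb : 0 < b)
    (h : p ^ a = r ^ b + 1) :
    (p = 2 ∧ b = 1 ∧ ∃ k : ℕ, r = 2 ^ k - 1) ∨
    (r = 2 ∧ a = 1 ∧ ∃ k : ℕ, p = 2 ^ k + 1) ∨
    p ^ a = 9 := by
  have hp2 := hp.two_le
  have hr2 := hr.two_le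
  by_cases hpe : p = 2
  · subst hpe
    -- 2 ^ a = r ^ b + 1, so r must be odd
    have hrodd : Odd r := by
      rcases hr.eq_two_or_odd' with h2 | ho
      · subst h2
        exfalso
        have h1 : 2 ∣ 2 ^ a := dvd_pow_self 2 ha.ne'
        have h2 : 2 ∣ 2 ^ b := dvd_pow_self 2 hb.ne'
        omega
      · exact ho
    rcases Nat.even_or_odd b with hbe | hbo
    · -- b even: contradiction via mod 4
      exfalso
      obtain ⟨c, hc⟩ := hbe
      have hc1 : 0 < c := by omega
      have hm : r ^ b = (r ^ c) ^ 2 := by rw [hc, pow_add, sq]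
      have hmodd : Odd (r ^ c) := hrodd.pow
      have hm3 : 3 ≤ r ^ c := by
        have := Nat.le_self_pow hc1.ne' r
        have hro : r ≠ 2 := by rintro rfl; exact (by norm_num : ¬ Odd 2) hrodd
        omega
      obtain ⟨k, hk⟩ := hmodd
      have hsq : (r ^ c) ^ 2 % 4 = 1 := by
        rw [hk, show (2 * k + 1) ^ 2 = 4 * (k * k + k) + 1 from by ring,
          Nat.mul_add_mod]
      rcases Nat.lt_or_ge a 2 with ha2 | ha2
      · -- a = 1
        have ha1 : a = 1 := by omega
        rw [ha1, pow_one, hm] at h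
        have h9 := Nat.pow_le_pow_left hm3 2
        omega
      · have h4 : 2 ^ a = 4 * 2 ^ (a - 2) := by
          rw [show (4 : ℕ) = 2 ^ 2 by norm_num, ← pow_add]
          congr 1
          omega
        rw [hm] at h
        omega
    · -- b odd: show b = 1 using geometric sum over ℤ
      left
      have hfac : ((r : ℤ) + 1) * (∑ i ∈ range b, (-(r : ℤ)) ^ i) = 2 ^ a := by
        have hg := geom_sum_mul (-(r : ℤ)) b
        rw [hbo.neg_pow] at hg
        have hZ : ((r : ℤ)) ^ b + 1 = 2 ^ a := by exact_mod_cast h.symm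
        linarith
      have hrpos : (0 : ℤ) < (r : ℤ) + 1 := by
        have : (0 : ℤ) < (r : ℤ) := by exact_mod_cast (show 0 < r by omega)
        linarith
      have hpos : 0 < ∑ i ∈ range b, (-(r : ℤ)) ^ i := by
        have h2 : (0 : ℤ) < 2 ^ a := by positivity
        nlinarith
      have hdvd : (∑ i ∈ range b, (-(r : ℤ)) ^ i) ∣ 2 ^ a :=
        Dvd.intro_left _ hfac
      have hyodd : Odd (-(r : ℤ)) := by
        obtain ⟨k, hk⟩ := hrodd
        exact ⟨-(k : ℤ) - 1, by push_cast [hk]; ring⟩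
      have hkey := geom_sum_dvd_two_pow (-(r : ℤ)) b a hyodd hbo hdvd hpos
      rw [hbo.neg_pow] at hkey
      have hrn : (r : ℤ) ^ b = (r : ℤ) := by linarith
      have hrnN : r ^ b = r := by exact_mod_cast hrn
      have hb1 : b = 1 :=
        Nat.pow_right_injective hr2 (by rw [hrnN, pow_one] : r ^ b = r ^ 1)
      refine ⟨rfl, hb1, a, ?_⟩
      rw [hb1, pow_one] at h
      omega
  · -- p odd, so r = 2
    have hpodd : Odd p := hp.odd_of_ne_two hpe
    have hre : r = 2 := by
      rcases hr.eq_two_or_odd' with h2 | ho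
      · exact h2
      · exfalso
        have h1 : p ^ a % 2 = 1 := Nat.odd_iff.mp hpodd.pow
        have h2 : r ^ b % 2 = 1 := Nat.odd_iff.mp ho.pow
        omega
    subst hre
    rcases Nat.even_or_odd a with hae | hao
    · -- a even: p ^ a = 9
      right; right
      obtain ⟨c, hc⟩ := hae
      have hc1 : 0 < c := by omega
      have hm : p ^ a = (p ^ c) ^ 2 := by rw [hc, pow_add, sq]
      have hmodd : Odd (p ^ c) := hpodd.pow
      have hm3 : 3 ≤ p ^ c := by
        have := Nat.le_self_pow hc1.ne' p
        omega
      -- write p ^ c = u + 1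
      obtain ⟨u, hu⟩ : ∃ u, p ^ c = u + 1 := ⟨p ^ c - 1, by omega⟩
      have hueven : u % 2 = 0 := by
        have := Nat.odd_iff.mp hmodd
        omega
      have hfac : u * (u + 2) = 2 ^ b := by
        have h1 : (p ^ c) ^ 2 = 2 ^ b + 1 := by rw [← hm, h]
        have h2 : (u + 1) ^ 2 = u * (u + 2) + 1 := by ring
        rw [hu] at h1
        omega
      have hd1 : u ∣ 2 ^ b := ⟨u + 2, hfac.symm⟩
      obtain ⟨i, hi, hieq⟩ := (Nat.dvd_prime_pow Nat.prime_two).mp hd1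
      have hd2 : (u + 2) ∣ 2 ^ b := ⟨u, by rw [← hfac, mul_comm]⟩
      obtain ⟨j, hj, hjeq⟩ := (Nat.dvd_prime_pow Nat.prime_two).mp hd2
      have hij : 2 ^ i + 2 = 2 ^ j := by omega
      have hu2 : 2 ≤ u := by omega
      have hi1 : i = 1 := by
        rcases Nat.lt_or_ge i 2 with h' | h'
        · interval_cases i
          · exfalso; simp at hieq; omega
          · rfl
        · exfalso
          have h4i : 2 ^ i = 4 * 2 ^ (i - 2) := by
            rw [show (4 : ℕ) = 2 ^ 2 by norm_num, ← pow_add]; congr 1; omega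
          have hj2 : 2 ≤ j := by
            by_contra h''
            push_neg at h''
            interval_cases j <;> omega
          have h4j : 2 ^ j = 4 * 2 ^ (j - 2) := by
            rw [show (4 : ℕ) = 2 ^ 2 by norm_num, ← pow_add]; congr 1; omega
          omega
      have hm3' : p ^ c = 3 := by
        rw [hi1, pow_one] at hieq; omega
      have hp3 : p = 3 := by
        have hdvd3 : p ∣ 3 := hm3' ▸ dvd_pow_self p hc1.ne'
        exact (Nat.prime_dvd_prime_iff_eq hp (by norm_num)).mp hdvd3
      subst hp3
      have hc' : c = 1 :=
        Nat.pow_right_injective (by norm_num)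
          (by rw [pow_one]; exact hm3' : (3 : ℕ) ^ c = 3 ^ 1)
      rw [hc, hc']
      norm_num
    · -- a odd: a = 1 via geometric sums
      right; left
      have hfac : (∑ i ∈ range a, (p : ℤ) ^ i) * ((p : ℤ) - 1) = 2 ^ b := by
        have hg := geom_sum_mul (p : ℤ) a
        have hZ : ((p : ℤ)) ^ a - 1 = 2 ^ b := by
          have : ((p : ℤ)) ^ a = 2 ^ b + 1 := by exact_mod_cast h
          linarith
        linarith
      have hpos : 0 < ∑ i ∈ range a, (p : ℤ) ^ i := by
        apply Finset.sum_pos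
        · intro i _
          have : (0 : ℤ) < (p : ℤ) := by exact_mod_cast (show 0 < p by omega)
          positivity
        · exact nonempty_range_iff.mpr ha.ne'
      have hdvd : (∑ i ∈ range a, (p : ℤ) ^ i) ∣ 2 ^ b :=
        Dvd.intro _ hfac
      have hyodd : Odd ((p : ℤ)) := by
        obtain ⟨k, hk⟩ := hpodd
        exact ⟨(k : ℤ), by push_cast [hk]; ring⟩
      have hkey := geom_sum_dvd_two_pow (p : ℤ) a b hyodd hao hdvd hpos
      have hpnN : p ^ a = p := by exact_mod_cast hkey
      have ha1 : a = 1 :=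
        Nat.pow_right_injective hp2 (by rw [hpnN, pow_one] : p ^ a = p ^ 1)
      refine ⟨rfl, ha1, b, ?_⟩
      rw [ha1, pow_one] at h
      exact h
end

section
/- Let 0 < c < d < d′ < n be integers, write n = kd + l with 0 ≤ l < d and n = k′d′ + l′ with 0 ≤ l′ < d′. Then k(d − c) + max(0, l − c) ≤ k′(d′ − c) + max(0, l′ − c). -/
/-- Monotonicity in `d`: if `0 < c < d < d' < n`, `n = k·d + l` with `0 ≤ l < d`
and `n = k'·d' + l'` with `0 ≤ l' < d'`, then
`k(d - c) + max(0, l - c) ≤ k'(d' - c) + max(0, l' - c)` (natural subtraction). -/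
theorem young_diagram_bound_monotone
    (c d d' n k l k' l' : ℕ) (hc : 0 < c) (hcd : c < d) (hdd' : d < d') (hd'n : d' < n)
    (hn : n = k * d + l) (hl : l < d)
    (hn' : n = k' * d' + l') (hl' : l' < d') :
    k * (d - c) + (l - c) ≤ k' * (d' - c) + (l' - c) := by
  have hd0 : 0 < d := hc.trans hcd
  -- k' ≤ k
  have hk'k : k' ≤ k := by
    have h1 : k' * d ≤ k' * d' := Nat.mul_le_mul_left _ hdd'.le
    have h2 : k' * d' ≤ n := by omega
    have h3 : k' * d < (k + 1) * d := by
      have : n < (k + 1) * d := by rw [add_mul]; omega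
      omega
    exact Nat.lt_succ_iff.mp (Nat.lt_of_mul_lt_mul_right h3)
  have e1 : k * (d - c) = k * d - k * c := by rw [Nat.mul_sub]
  have e2 : k' * (d' - c) = k' * d' - k' * c := by rw [Nat.mul_sub]
  have hkc : k * c ≤ k * d := Nat.mul_le_mul_left _ hcd.le
  rcases eq_or_lt_of_le hk'k with h | h
  · subst h
    have hmono : k' * d ≤ k' * d' := Nat.mul_le_mul_left _ hdd'.le
    have e3 : k' * (d' - c) = k' * d' - k' * c := by rw [Nat.mul_sub]
    omega
  · have hcc : k' * c + c ≤ k * c := by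
      calc k' * c + c = (k' + 1) * c := by ring
        _ ≤ k * c := Nat.mul_le_mul_right _ h
    have hdc : k' * c ≤ k' * d' := Nat.mul_le_mul_left _ (hcd.trans hdd').le
    omega
end

section
/- Let g ∈ GL_n(F_2) be an element of order |g| = 2^{m+1} with m > 0, let d be the degree of the minimal polynomial of g, and suppose d < |g|. Write n = kd + l with 0 ≤ l < d, and let z = g^{2^m}. Then j(g) := dim (Id − z)(F_2^n) satisfies j(g) ≤ (n − l)(1 − |g|/(2d)) + max(0, l − |g|/2). -/
/-!
Since `g` has `2`-power order, `B = g - 1` is nilpotent, so the minimal polynomial of `g` is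
`(X - 1)^d` and `B^d = 0`; by the Frobenius in characteristic `2`, `1 - z = B^(2^m)`.
Put `a = 2^m` (`a < d` because `z ≠ 1`) and let `u` be the number of Jordan blocks of `B` of
size `> a`. A block of size `s > a` contributes `s - a ≤ d - a` to `rank B^a` and
`s = (s - a) + a` to `n`, so `rank B^a ≤ (d - a) u` and `rank B^a + a u ≤ n`. If `u ≤ k` the
first bound gives `rank B^a ≤ k (d - a)`; otherwise the second gives
`rank B^a ≤ k (d - a) + l - a`. Jordan forms are avoided: both bounds hold because
`j ↦ rank B^j` has antitone decrements `rank B^j - rank B^(j+1) = dim (ker B ⊓ range B^j)`.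
-/

open Module Polynomial

theorem one_sub_pow_two_pow_eq_sub_one_pow {A : Type*} [Ring A] [Algebra (ZMod 2) A] (x : A)
    (e : ℕ) : 1 - x ^ 2 ^ e = (x - 1) ^ 2 ^ e := by
  have hX : (1 - X ^ 2 ^ e : (ZMod 2)[X]) = (X - 1) ^ 2 ^ e := by
    rw [sub_pow_char_pow, one_pow, ← neg_sub, CharTwo.neg_eq]
  simpa using congrArg (aeval x) hX

theorem minpoly_eq_X_sub_C_pow_natDegree {K A : Type*} [Field K] [Ring A] [Algebra K A] {x : A}
    {c : K} {N : ℕ} (hx : (x - algebraMap K A c) ^ N = 0) :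
    minpoly K x = (X - C c) ^ (minpoly K x).natDegree := by
  have hroot : aeval x ((X - C c) ^ N) = 0 := by simpa using hx
  have hint : IsIntegral K x := ⟨_, (monic_X_sub_C c).pow N, by simpa using hroot⟩
  obtain ⟨i, -, hassoc⟩ :=
    (dvd_prime_pow (irreducible_X_sub_C c).prime N).mp (minpoly.dvd K x hroot)
  have hmin : minpoly K x = (X - C c) ^ i :=
    eq_of_monic_of_associated (minpoly.monic hint) ((monic_X_sub_C c).pow i) hassoc
  rw [hmin, natDegree_pow, natDegree_X_sub_C, mul_one]

theorem sub_algebraMap_pow_natDegree_minpoly_eq_zero {K A : Type*} [Field K] [Ring A]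
    [Algebra K A] {x : A} {c : K} {N : ℕ} (hx : (x - algebraMap K A c) ^ N = 0) :
    (x - algebraMap K A c) ^ (minpoly K x).natDegree = 0 := by
  have h := minpoly.aeval K x
  rwa [minpoly_eq_X_sub_C_pow_natDegree hx, map_pow, map_sub, aeval_X, aeval_C] at h

section ConcaveSequence

variable {r u : ℕ → ℕ}

theorem le_add_sub_mul_of_antitone_decrement (hu : Antitone u) (hr : ∀ j, r j = r (j + 1) + u j)
    {a b : ℕ} (hab : a ≤ b) :
    r a ≤ r b + (b - a) * u a := by
  induction b, hab using Nat.le_induction with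
  | base => simp
  | succ b hab ih =>
    have hstep := hr b
    have hub := hu hab
    rw [Nat.sub_add_comm hab, add_one_mul]
    omega

theorem add_sub_mul_le_of_antitone_decrement (hu : Antitone u) (hr : ∀ j, r j = r (j + 1) + u j)
    {a b : ℕ} (hab : a ≤ b) :
    r b + (b - a) * u b ≤ r a := by
  induction b, hab using Nat.le_induction with
  | base => simp
  | succ b hab ih =>
    have hstep := hr b
    have hub := hu (Nat.le_add_right b 1)
    have hmul := Nat.mul_le_mul_left (b - a) hub
    rw [Nat.sub_add_comm hab, add_one_mul]
    omega

end ConcaveSequence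

namespace LinearMap

variable {K V : Type*} [DivisionRing K] [AddCommGroup V] [Module K V] [FiniteDimensional K V]
  (φ : Module.End K V)

theorem finrank_range_pow_eq_finrank_range_pow_succ_add (j : ℕ) :
    finrank K (range (φ ^ j)) =
      finrank K (range (φ ^ (j + 1))) + finrank K ↥(ker φ ⊓ range (φ ^ j)) := by
  have hrange : range (φ.domRestrict (range (φ ^ j))) = range (φ ^ (j + 1)) := by
    rw [range_domRestrict, pow_succ', Module.End.mul_eq_comp, range_comp]
  have hker : finrank K (ker (φ.domRestrict (range (φ ^ j)))) =
      finrank K ↥(ker φ ⊓ range (φ ^ j)) := by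
    rw [ker_domRestrict, ← (Submodule.comapSubtypeEquivOfLe inf_le_right).finrank_eq,
      Submodule.comap_inf, Submodule.comap_subtype_self, inf_top_eq]
  rw [← hrange, ← hker, finrank_range_add_finrank_ker]

theorem antitone_finrank_ker_inf_range_pow :
    Antitone fun j ↦ finrank K ↥(ker φ ⊓ range (φ ^ j)) := by
  intro i j hij
  refine Submodule.finrank_mono (inf_le_inf_left _ ?_)
  rw [← Nat.add_sub_cancel' hij, pow_add, Module.End.mul_eq_comp]
  exact range_comp_le_range _ _

theorem finrank_range_pow_le {d a : ℕ} (hd : φ ^ d = 0) (had : a ≤ d) (k l : ℕ)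
    (hV : finrank K V = k * d + l) :
    finrank K (range (φ ^ a)) ≤ k * (d - a) + (l - a) := by
  set u := finrank K ↥(ker φ ⊓ range (φ ^ a))
  set r := finrank K (range (φ ^ a))
  have hr := finrank_range_pow_eq_finrank_range_pow_succ_add φ
  have hu := antitone_finrank_ker_inf_range_pow φ
  have h_tail : r ≤ finrank K (range (φ ^ d)) + (d - a) * u :=
    le_add_sub_mul_of_antitone_decrement hu hr had
  have h_head : r + (a - 0) * u ≤ finrank K (range (φ ^ 0)) :=
    add_sub_mul_le_of_antitone_decrement hu hr (Nat.zero_le a)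
  rw [hd, range_zero, finrank_bot] at h_tail
  rw [Nat.sub_zero, pow_zero, Module.End.one_eq_id, range_id, finrank_top, hV] at h_head
  obtain ⟨D, rfl⟩ := Nat.exists_eq_add_of_le had
  rw [Nat.add_sub_cancel_left] at h_tail ⊢
  rcases le_or_gt u k with huk | hku
  · have hDu := Nat.mul_le_mul_left D huk
    rw [mul_comm k D]
    omega
  · have hau := Nat.mul_le_mul_left a hku
    rw [mul_add, mul_comm k a] at h_head
    rw [Nat.mul_succ] at hau
    omega

end LinearMap

section UnipotentOverF2

variable {A : Type*} [Ring A] [Algebra (ZMod 2) A] {g : A}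

theorem sub_one_pow_natDegree_minpoly_eq_zero {e : ℕ} (hord : orderOf g = 2 ^ e) :
    (g - 1) ^ (minpoly (ZMod 2) g).natDegree = 0 := by
  have hg : (g - algebraMap (ZMod 2) A 1) ^ 2 ^ e = 0 := by
    rw [map_one, ← one_sub_pow_two_pow_eq_sub_one_pow, ← hord, pow_orderOf_eq_one, sub_self]
  simpa using sub_algebraMap_pow_natDegree_minpoly_eq_zero hg

theorem two_pow_lt_natDegree_minpoly {m : ℕ} (hord : orderOf g = 2 ^ (m + 1)) :
    2 ^ m < (minpoly (ZMod 2) g).natDegree := by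
  by_contra! hle
  refine pow_ne_one_of_lt_orderOf (x := g) (pow_pos two_pos m).ne' ?_ ?_
  · rw [hord]
    exact Nat.pow_lt_pow_right one_lt_two m.lt_succ_self
  · rw [← sub_eq_zero, ← neg_sub, one_sub_pow_two_pow_eq_sub_one_pow,
      pow_eq_zero_of_le hle (sub_one_pow_natDegree_minpoly_eq_zero hord), neg_zero]

end UnipotentOverF2

theorem rank_involution_bound_of_min_poly_general
    (n m d k l : ℕ)
    (g : Matrix (Fin n) (Fin n) (ZMod 2))
    (hord : orderOf g = 2 ^ (m + 1))
    (hd : (minpoly (ZMod 2) g).natDegree = d)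
    (hn : n = k * d + l) :
    (Matrix.rank (1 - g ^ (2 ^ m)) : ℚ) ≤
      ((n : ℚ) - l) * (1 - (2 ^ (m + 1) : ℚ) / (2 * d)) +
        max 0 ((l : ℚ) - (2 ^ m : ℚ)) := by
  have hdm : 2 ^ m < d := hd ▸ two_pow_lt_natDegree_minpoly hord
  have hnil : Matrix.toLin' (g - 1) ^ d = 0 := by
    rw [← Matrix.toLin'_pow, ← hd, sub_one_pow_natDegree_minpoly_eq_zero hord, map_zero]
  have hrank : Matrix.rank (1 - g ^ 2 ^ m) ≤ k * (d - 2 ^ m) + (l - 2 ^ m) := by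
    rw [one_sub_pow_two_pow_eq_sub_one_pow, Matrix.rank, ← Matrix.toLin'_apply',
      Matrix.toLin'_pow]
    exact LinearMap.finrank_range_pow_le _ hnil hdm.le k l (by rw [finrank_fin_fun, hn])
  have hd0 : (d : ℚ) ≠ 0 := by exact_mod_cast (Nat.zero_lt_of_lt hdm).ne'
  have hRHS : ((n : ℚ) - l) * (1 - (2 ^ (m + 1) : ℚ) / (2 * d)) = k * ((d : ℚ) - 2 ^ m) := by
    subst hn
    push_cast
    field_simp
    ring
  have htrunc : ((l - 2 ^ m : ℕ) : ℚ) ≤ max 0 ((l : ℚ) - 2 ^ m) := by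
    rcases le_total l (2 ^ m) with hl | hl
    · simp [Nat.sub_eq_zero_of_le hl]
    · rw [Nat.cast_sub hl, Nat.cast_pow, Nat.cast_ofNat]
      exact le_max_right _ _
  calc (Matrix.rank (1 - g ^ 2 ^ m) : ℚ)
      ≤ k * ((d - 2 ^ m : ℕ) : ℚ) + ((l - 2 ^ m : ℕ) : ℚ) := by exact_mod_cast hrank
    _ ≤ _ := by
      rw [hRHS, Nat.cast_sub hdm.le]
      push_cast
      gcongr

/-- Let `g ∈ GL_n(F₂)` have order `2^(m+1)`, `m > 0`, minimal polynomial of degree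
`d < |g|`, and write `n = k·d + l`, `0 ≤ l < d`. With `z = g^(2^m)` the involution
in `⟨g⟩` and `j(g) = rank(Id - z)`, one has
`j(g) ≤ (n - l)(1 - |g|/(2d)) + max(0, l - |g|/2)`. -/
theorem rank_involution_bound_of_min_poly
    (n m d k l : ℕ) (hm : 0 < m)
    (g : Matrix (Fin n) (Fin n) (ZMod 2))
    (hord : orderOf g = 2 ^ (m + 1))
    (hd : (minpoly (ZMod 2) g).natDegree = d)
    (hdlt : d < 2 ^ (m + 1))
    (hn : n = k * d + l) (hl : l < d) :
    (Matrix.rank (1 - g ^ (2 ^ m)) : ℚ) ≤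
      ((n : ℚ) - l) * (1 - (2 ^ (m + 1) : ℚ) / (2 * d)) +
        max 0 ((l : ℚ) - (2 ^ m : ℚ)) :=
  rank_involution_bound_of_min_poly_general n m d k l g hord hd hn
end

section
/- Let q + 1 = 2^{m+1} be a power of 2 and let g ∈ GL_n(F_2) be a unipotent element of order q + 1 whose minimal polynomial has degree q (= |g| − 1). Let z = g^{(q+1)/2} and j(g) = rank(Id − z). Then: if q | n, j(g) ≤ n(q−1)/(2q); if q | (n−1), j(g) ≤ (n−1)(q−1)/(2q); if q | (n+1), j(g) ≤ (n+1)(q−1)/(2q) − 1. -/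
open Matrix LinearMap Module Polynomial

/-- Moving a submodule inclusion through a linear map loses at most the codimension. -/
private lemma aux_finrank_map_le {K V : Type*} [Field K] [AddCommGroup V] [Module K V]
    [FiniteDimensional K V] (f : V →ₗ[K] V) {U W : Submodule K V} (h : W ≤ U) :
    finrank K (U.map f) + finrank K W ≤ finrank K (W.map f) + finrank K U := by
  have hU := LinearMap.finrank_range_add_finrank_ker (f.domRestrict U)
  have hW := LinearMap.finrank_range_add_finrank_ker (f.domRestrict W)
  rw [LinearMap.range_domRestrict, LinearMap.ker_domRestrict] at hU hW
  have eU : (LinearMap.ker f).comap U.subtype = ((LinearMap.ker f) ⊓ U).comap U.subtype := by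
    ext x; simp [x.2]
  have eW : (LinearMap.ker f).comap W.subtype = ((LinearMap.ker f) ⊓ W).comap W.subtype := by
    ext x; simp [x.2]
  rw [eU] at hU
  rw [eW] at hW
  have hfU : finrank K (((LinearMap.ker f) ⊓ U).comap U.subtype) =
      finrank K ((LinearMap.ker f) ⊓ U : Submodule K V) :=
    (Submodule.comapSubtypeEquivOfLe inf_le_right).finrank_eq
  have hfW : finrank K (((LinearMap.ker f) ⊓ W).comap W.subtype) =
      finrank K ((LinearMap.ker f) ⊓ W : Submodule K V) :=
    (Submodule.comapSubtypeEquivOfLe inf_le_right).finrank_eq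
  have hmono : finrank K ((LinearMap.ker f) ⊓ W : Submodule K V) ≤
      finrank K ((LinearMap.ker f) ⊓ U : Submodule K V) :=
    Submodule.finrank_mono (inf_le_inf_left _ h)
  omega

/-- Convexity of ranks of powers. -/
private lemma aux_rank_pow_convex {K : Type*} [Field K] {n : ℕ}
    (N : Matrix (Fin n) (Fin n) K) (i : ℕ) :
    (N ^ (i+1)).rank + (N ^ (i+1)).rank ≤ (N ^ (i+2)).rank + (N ^ i).rank := by
  have hrange : ∀ k : ℕ, LinearMap.range ((N ^ (k+1)).mulVecLin) =
      (LinearMap.range ((N ^ k).mulVecLin)).map N.mulVecLin := by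
    intro k
    rw [show N ^ (k+1) = N * N ^ k from (pow_succ' N k), Matrix.mulVecLin_mul,
      LinearMap.range_comp]
  have hle : ∀ k : ℕ, LinearMap.range ((N ^ (k+1)).mulVecLin) ≤
      LinearMap.range ((N ^ k).mulVecLin) := by
    intro k
    rw [show N ^ (k+1) = N ^ k * N from (pow_succ N k), Matrix.mulVecLin_mul]
    exact LinearMap.range_comp_le_range _ _
  have := aux_finrank_map_le (N.mulVecLin) (hle i)
  rw [← hrange i, ← hrange (i+1)] at this
  simpa [Matrix.rank] using this

/-- Chord bound for a convex integer sequence. -/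
private lemma aux_chord (R : ℕ → ℤ)
    (hconv : ∀ i, R (i+1) + R (i+1) ≤ R (i+2) + R i) (t q : ℕ) (ht : t ≤ q) :
    (q : ℤ) * R t ≤ ((q : ℤ) - t) * R 0 + t * R q := by
  set D : ℕ → ℤ := fun i => R i - R (i+1) with hD
  have hanti : ∀ i j : ℕ, i ≤ j → D j ≤ D i := by
    intro i j hij
    induction j, hij using Nat.le_induction with
    | base => exact le_refl _
    | succ k hk ih =>
        have := hconv k
        have hk2 : D (k+1) ≤ D k := by simp only [hD]; linarith
        linarith
  have claim1 : ∀ a b : ℕ, a ≤ b → R a - R b ≤ ((b:ℤ) - a) * D a := by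
    intro a b hab
    induction b, hab using Nat.le_induction with
    | base => simp
    | succ k hk ih =>
        have h1 : D k ≤ D a := hanti a k hk
        have hDk : D k = R k - R (k+1) := rfl
        have hexp : ((k:ℤ) + 1 - a) * D a = ((k:ℤ) - a) * D a + D a := by ring
        push_cast
        linarith
  have claim2 : ∀ a b : ℕ, a ≤ b → ((b:ℤ) - a) * D b ≤ R a - R b := by
    intro a b hab
    induction b, hab using Nat.le_induction with
    | base => simp
    | succ k hk ih =>
        have h1 : D (k+1) ≤ D k := hanti k (k+1) (Nat.le_succ k)
        have hDk : D k = R k - R (k+1) := rfl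
        have hnn : (0:ℤ) ≤ (k:ℤ) + 1 - a := by
          have : (a:ℤ) ≤ k := by exact_mod_cast hk
          linarith
        have h2 : ((k:ℤ) + 1 - a) * D (k+1) ≤ ((k:ℤ) + 1 - a) * D k :=
          mul_le_mul_of_nonneg_left h1 hnn
        have hexp : ((k:ℤ) + 1 - a) * D k = ((k:ℤ) - a) * D k + D k := by ring
        push_cast
        linarith
  have h1 := claim1 t q ht
  have h2 := claim2 0 t (Nat.zero_le t)
  have htq : (t:ℤ) ≤ q := by exact_mod_cast ht
  have hm1 : (t:ℤ) * (R t - R q) ≤ (t:ℤ) * (((q:ℤ) - t) * D t) :=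
    mul_le_mul_of_nonneg_left h1 (by positivity)
  have hm2 : ((q:ℤ) - t) * (((t:ℤ) - 0) * D t) ≤ ((q:ℤ) - t) * (R 0 - R t) :=
    mul_le_mul_of_nonneg_left h2 (by linarith)
  nlinarith [hm1, hm2]

set_option maxHeartbeats 1000000 in
/-- Let `q + 1 = 2^(m+1)` be a 2-power (`m > 0`) and let `g ∈ GL_n(F₂)` be a unipotent
element of order `q + 1` whose minimal polynomial has degree `q = |g| - 1`. Let
`z = g^((q+1)/2) = g^(2^m)` and `j(g) = rank(Id - z)`. Then `j(g) ≤ n(q-1)/(2q)` if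
`q ∣ n`; `j(g) ≤ (n-1)(q-1)/(2q)` if `q ∣ (n-1)`; and `j(g) ≤ (n+1)(q-1)/(2q) - 1` if
`q ∣ (n+1)`. -/
theorem rank_involution_bound_order_q_add_one
    (n m q : ℕ) (hm : 0 < m) (hq : q + 1 = 2 ^ (m + 1))
    (g : Matrix (Fin n) (Fin n) (ZMod 2))
    (hord : orderOf g = q + 1)
    (hd : (minpoly (ZMod 2) g).natDegree = q) :
    ((q : ℤ) ∣ (n : ℤ) →
        (Matrix.rank (1 - g ^ (2 ^ m)) : ℚ) ≤ (n : ℚ) * (q - 1) / (2 * q)) ∧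
    ((q : ℤ) ∣ ((n : ℤ) - 1) →
        (Matrix.rank (1 - g ^ (2 ^ m)) : ℚ) ≤ ((n : ℚ) - 1) * (q - 1) / (2 * q)) ∧
    ((q : ℤ) ∣ ((n : ℤ) + 1) →
        (Matrix.rank (1 - g ^ (2 ^ m)) : ℚ) ≤ ((n : ℚ) + 1) * (q - 1) / (2 * q) - 1) := by
  -- basic numerology
  have h2m : 2 * 2 ^ m = 2 ^ (m + 1) := by rw [pow_succ]; ring
  have htge : 2 ≤ 2 ^ m := by
    calc 2 = 2 ^ 1 := by norm_num
    _ ≤ 2 ^ m := Nat.pow_le_pow_right (by norm_num) hm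
  have hq3 : 3 ≤ q := by omega
  -- n is positive
  have hn : n ≠ 0 := by
    rintro rfl
    have : g = 1 := Subsingleton.elim _ _
    rw [this, orderOf_one] at hord
    omega
  haveI : Nonempty (Fin n) := ⟨⟨0, Nat.pos_of_ne_zero hn⟩⟩
  haveI : Fact (Nat.Prime 2) := ⟨by norm_num⟩
  -- the nilpotent part N = g - 1 satisfies N ^ q = 0
  have hgpow : g ^ (2^(m+1)) = 1 := by rw [← hq, ← hord]; exact pow_orderOf_eq_one g
  have hNpow : (g - 1) ^ (2^(m+1)) = 0 := by
    rw [sub_pow_char_pow_of_commute 2 (m+1) (Commute.one_right g), hgpow, one_pow, sub_self]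
  have hint : IsIntegral (ZMod 2) g := IsIntegral.of_finite _ g
  have hdvd : minpoly (ZMod 2) g ∣ (X - C 1) ^ (2^(m+1)) := minpoly.dvd _ _ (by
    rw [map_pow, map_sub, aeval_X, aeval_C, _root_.map_one]
    exact hNpow)
  obtain ⟨i, hi, hassoc⟩ := (dvd_prime_pow (prime_X_sub_C (1 : ZMod 2)) _).mp hdvd
  have hmin : minpoly (ZMod 2) g = (X - C 1) ^ i :=
    eq_of_monic_of_associated (minpoly.monic hint) ((monic_X_sub_C _).pow _) hassoc
  have hiq : i = q := by
    rw [hmin, natDegree_pow, natDegree_X_sub_C, mul_one] at hd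
    exact hd
  have hNq : (g - 1) ^ q = 0 := by
    have h0 := minpoly.aeval (ZMod 2) g
    rw [hmin, hiq, map_pow, map_sub, aeval_X, aeval_C, _root_.map_one] at h0
    exact h0
  -- the involution part
  have hz : (1 : Matrix (Fin n) (Fin n) (ZMod 2)) - g ^ 2 ^ m = (g - 1) ^ 2 ^ m := by
    rw [sub_pow_char_pow_of_commute 2 m (Commute.one_right g), one_pow,
      CharTwo.sub_eq_add, CharTwo.sub_eq_add, add_comm]
  -- the rank sequence
  set N : Matrix (Fin n) (Fin n) (ZMod 2) := g - 1 with hN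
  set R' : ℕ → ℤ := fun i => ((N ^ i).rank : ℤ) with hR'
  have hconv : ∀ i, R' (i+1) + R' (i+1) ≤ R' (i+2) + R' i := fun i => by
    simp only [hR']; exact_mod_cast aux_rank_pow_convex N i
  have hchord := aux_chord R' hconv (2 ^ m) q (by omega)
  have hR0 : R' 0 = n := by
    simp only [hR', pow_zero, Matrix.rank_one, Fintype.card_fin]
  have hRq : R' q = 0 := by
    simp only [hR', hNq, Matrix.rank_zero, Int.natCast_zero]
  rw [hR0, hRq, mul_zero, add_zero] at hchord
  -- the main integral bound : (2T-1) * j ≤ (T-1) * n  where T = 2^m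
  set T : ℤ := ((2 ^ m : ℕ) : ℤ) with hT
  have hqn : q + 1 = 2 * 2 ^ m := by omega
  have hqT : (q : ℤ) = 2 * T - 1 := by
    have h : ((q:ℤ)) + 1 = 2 * T := by rw [hT]; exact_mod_cast hqn
    linarith
  have hT2 : (2 : ℤ) ≤ T := by rw [hT]; exact_mod_cast htge
  set j : ℤ := R' (2 ^ m) with hj
  have main : (2 * T - 1) * j ≤ (T - 1) * n := by
    rw [hqT] at hchord
    have hTn : ((2 * T - 1 : ℤ) - T) * (n:ℤ) = (T - 1) * (n:ℤ) := by ring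
    calc (2 * T - 1) * j = ((q:ℤ)) * j := by rw [hqT]
    _ ≤ ((2 * T - 1) - T) * (n:ℤ) := by rw [← hqT] at hchord ⊢; exact hchord
    _ = (T - 1) * (n:ℤ) := hTn
  have hjnn : 0 ≤ j := by rw [hj]; simp only [hR']; exact Int.natCast_nonneg _
  -- identify the rank in the statement with j
  have hrank : (Matrix.rank (1 - g ^ 2 ^ m) : ℤ) = j := by
    rw [hz]
  have h2q : (0:ℚ) < 2 * q := by
    have : (3:ℚ) ≤ q := by exact_mod_cast hq3
    linarith
  have hq1 : ((q:ℚ) - 1) = ((((q:ℤ) - 1) : ℤ) : ℚ) := by push_cast; ring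
  refine ⟨?_, ?_, ?_⟩
  · -- q ∣ n
    intro _
    rw [le_div_iff₀ h2q]
    have hZ : (Matrix.rank (1 - g ^ 2 ^ m) : ℤ) * (2 * q) ≤ (n : ℤ) * ((q:ℤ) - 1) := by
      rw [hrank, hqT]
      have h2 := mul_le_mul_of_nonneg_left main (by norm_num : (0:ℤ) ≤ 2)
      linarith
    have hQ : (Matrix.rank (1 - g ^ 2 ^ m) : ℚ) * (2 * q) ≤ (n : ℚ) * ((q:ℚ) - 1) := by
      exact_mod_cast hZ
    linarith
  · -- q ∣ n - 1
    rintro ⟨k, hk⟩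
    rw [le_div_iff₀ h2q]
    have hstep : j ≤ (T - 1) * k := by
      have hlt : (2 * T - 1) * j < (2 * T - 1) * ((T - 1) * k + 1) := by
        have hnk : (n : ℤ) = (2 * T - 1) * k + 1 := by rw [← hqT]; linarith [hk]
        rw [hnk] at main
        linarith
      have := lt_of_mul_lt_mul_left hlt (by linarith : (0:ℤ) ≤ 2 * T - 1)
      linarith
    have hZ : (Matrix.rank (1 - g ^ 2 ^ m) : ℤ) * (2 * q) ≤ ((n : ℤ) - 1) * ((q:ℤ) - 1) := by
      rw [hrank, hqT]
      have hnk : (n:ℤ) - 1 = (2 * T - 1) * k := by rw [← hqT]; linarith [hk]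
      rw [hnk]
      have h2 := mul_le_mul_of_nonneg_left hstep (by linarith : (0:ℤ) ≤ 2 * (2 * T - 1))
      linarith
    have hQ : (Matrix.rank (1 - g ^ 2 ^ m) : ℚ) * (2 * q) ≤ ((n : ℚ) - 1) * ((q:ℚ) - 1) := by
      exact_mod_cast hZ
    linarith
  · -- q ∣ n + 1
    rintro ⟨k, hk⟩
    rw [le_sub_iff_add_le, le_div_iff₀ h2q]
    have hnk : (n:ℤ) = (2 * T - 1) * k - 1 := by rw [← hqT]; linarith [hk]
    have hstep : j + 1 ≤ (T - 1) * k := by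
      have hlt : (2 * T - 1) * j < (2 * T - 1) * ((T - 1) * k) := by
        rw [hnk] at main
        linarith
      have := lt_of_mul_lt_mul_left hlt (by linarith : (0:ℤ) ≤ 2 * T - 1)
      linarith
    have hZ : ((Matrix.rank (1 - g ^ 2 ^ m) : ℤ) + 1) * (2 * q) ≤ ((n : ℤ) + 1) * ((q:ℤ) - 1) := by
      rw [hrank, hqT]
      have hnk1 : (n:ℤ) + 1 = (2 * T - 1) * k := by linarith [hnk]
      rw [hnk1]
      have h2 := mul_le_mul_of_nonneg_left hstep (by linarith : (0:ℤ) ≤ 2 * (2 * T - 1))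
      linarith
    have hQ : ((Matrix.rank (1 - g ^ 2 ^ m) : ℚ) + 1) * (2 * q) ≤ ((n : ℚ) + 1) * ((q:ℚ) - 1) := by
      exact_mod_cast hZ
    linarith
end

section
/- Let q be an odd prime power with q > 3. Then (q^3 + 1)/2 is not a power of 3. -/
/-- Let `q > 3` be a power of an odd prime. Then `(q³ + 1)/2` is not a power of `3`
(equivalently, `q³ + 1 ≠ 2·3^s` for all `s`). -/
theorem q_cubed_add_one_div_two_not_three_power
    (p n q : ℕ) (hp : p.Prime) (hpodd : Odd p) (hn : 0 < n) (hq : q = p ^ n)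
    (hq3 : 3 < q) :
    ¬ ∃ s : ℕ, q ^ 3 + 1 = 2 * 3 ^ s := by
  rintro ⟨s, hs⟩
  have hq4 : 4 ≤ q := hq3
  have hqodd : Odd q := hq ▸ hpodd.pow
  obtain ⟨k, hk⟩ : ∃ k, q ^ 2 = q + k := ⟨q ^ 2 - q, by have h := Nat.le_self_pow (two_ne_zero) q; omega⟩
  have hid : q ^ 3 + 1 = (q + 1) * (k + 1) := by nlinarith [hk]
  -- k + 1 is odd
  obtain ⟨a, ha⟩ := hqodd
  have hq2odd : Odd (q ^ 2) := (Odd.pow ⟨a, ha⟩ : Odd (q ^ 2))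
  obtain ⟨b, hb⟩ := hq2odd
  have hkodd : Odd (k + 1) := ⟨b - a, by omega⟩
  have hcop : Nat.Coprime (k + 1) 2 :=
    ((Nat.Prime.coprime_iff_not_dvd Nat.prime_two).mpr (by omega)).symm
  have hdvd : (k + 1) ∣ 2 * 3 ^ s := ⟨q + 1, by rw [← hs, hid]; ring⟩
  have hdvd3 : (k + 1) ∣ 3 ^ s :=
    hcop.dvd_of_dvd_mul_left hdvd
  obtain ⟨t, ht, hdt⟩ := (Nat.dvd_prime_pow (by norm_num : Nat.Prime 3)).mp hdvd3
  have hk12 : 12 ≤ k := by nlinarith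
  have ht2 : 2 ≤ t := by
    by_contra h
    interval_cases t <;> omega
  have h9 : (9 : ℕ) ∣ k + 1 := hdt ▸ (pow_dvd_pow 3 ht2 : 3 ^ 2 ∣ 3 ^ t)
  have hz : ((k : ZMod 9) + 1) = 0 := by
    have := (ZMod.natCast_eq_zero_iff (k + 1) 9).mpr h9
    push_cast at this
    exact this
  have hzk : ((q : ZMod 9)) ^ 2 = (q : ZMod 9) + (k : ZMod 9) := by
    exact_mod_cast congrArg (Nat.cast : ℕ → ZMod 9) hk
  have : ((q : ZMod 9)) ^ 2 - (q : ZMod 9) + 1 = 0 := by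
    rw [hzk]; ring_nf; ring_nf at hz; linear_combination hz
  have hall : ∀ x : ZMod 9, x ^ 2 - x + 1 ≠ 0 := by decide
  exact hall _ this
end

section
/- Let G be a connected linear algebraic group over an algebraically closed field with a Frobenius (Steinberg) endomorphism F, and let G^F be the fixed-point group. Let H ≤ G^F and H_1 = xHx^{-1} ≤ G^F for some x ∈ G. If the centralizer C_G(H) is connected, then H and H_1 are conjugate by an element of G^F. -/
/-- Lang-theorem conjugacy (abstract form): let `G` be (the group of points of) a
connected algebraic group with Frobenius endomorphism `F`, let `H` be a subgroup of
the fixed-point group `G^F` and suppose `H₁ = xHx⁻¹ ≤ G^F` for some `x ∈ G`. If the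
centralizer `C_G(H)` is connected — encoded, via Lang's theorem, by the surjectivity
of `c ↦ y⁻¹·F(y)` on `C_G(H)` — then `H` and `H₁` are conjugate by an element of
`G^F`. -/
theorem lang_conjugacy_of_connected_centralizer
    {G : Type*} [Group G] (F : G →* G) (H : Subgroup G) (x : G)
    (hHfix : ∀ h ∈ H, F h = h)
    (hH1fix : ∀ h ∈ H, F (x * h * x⁻¹) = x * h * x⁻¹)
    (hLang : ∀ c ∈ Subgroup.centralizer (H : Set G),
      ∃ y ∈ Subgroup.centralizer (H : Set G), c = y⁻¹ * F y) :
    ∃ y : G, F y = y ∧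
      (fun g => y * g * y⁻¹) '' (H : Set G) = (fun g => x * g * x⁻¹) '' (H : Set G) := by
  have hc : x⁻¹ * F x ∈ Subgroup.centralizer (H : Set G) := by
    intro h hh
    have h1 := hH1fix h hh
    have h2 := hHfix h hh
    simp only [map_mul, map_inv, h2] at h1
    calc h * (x⁻¹ * F x) = x⁻¹ * (x * h * x⁻¹) * F x := by group
      _ = x⁻¹ * (F x * h * (F x)⁻¹) * F x := by rw [h1]
      _ = (x⁻¹ * F x) * h := by group
  obtain ⟨y, hy, hyc⟩ := hLang _ hc
  have hyh : ∀ h ∈ H, x * y⁻¹ * h * (x * y⁻¹)⁻¹ = x * h * x⁻¹ := by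
    intro h hh
    have hcomm : h * y = y * h := hy h hh
    simp only [mul_inv_rev, inv_inv]
    calc x * y⁻¹ * h * (y * x⁻¹) = x * y⁻¹ * (h * y) * x⁻¹ := by group
      _ = x * y⁻¹ * (y * h) * x⁻¹ := by rw [hcomm]
      _ = x * h * x⁻¹ := by group
  refine ⟨x * y⁻¹, ?_, ?_⟩
  · have hFx : F x = x * (y⁻¹ * F y) := by rw [← hyc]; group
    simp only [map_mul, map_inv, hFx]
    group
  · ext g
    simp only [Set.mem_image]
    constructor
    · rintro ⟨h, hh, rfl⟩
      exact ⟨h, hh, (hyh h hh).symm⟩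
    · rintro ⟨h, hh, rfl⟩
      exact ⟨h, hh, (hyh h hh)⟩
end
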